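/- arXiv:2303.11416 — 8 statements merged into one kernel-verified Lean document; each statement's English description precedes it below -/
import Mathlib

section
/- Let G be a finite additive group of order k - 1 for some integer k ≥ 2. Then the family Σ consisting of the single block O_k (the element 0 repeated k times) together with k copies of the multiset G ∪ {0} (all elements of G with 0 taken twice, a multiset of size k) is a harmonious (G, k, k² + k) strong difference family. -/
/-!
Count differences with multiplicity: in `G ∪ {0}` the difference `0` arises only from the two
copies of `0`, while each `g ≠ 0` arises once from every `x ∈ G` and once more from each copy
of `0`, giving `2` and `|G| + 2 = k + 1` occurrences; `O_k` contributes `k (k - 1)` zeros.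
So `0` is covered `2k + k (k - 1) = k² + k` times and every `g ≠ 0` exactly `k (k + 1)` times.
-/

/-- The multiset of differences of a multisubset `B` of an additive group:
all differences `x - y` over ordered pairs of distinct positions of `B`. -/
def mDiffs {G : Type*} [AddGroup G] [DecidableEq G] (B : Multiset G) : Multiset G :=
  B.bind fun x => (B.erase x).map fun y => x - y

section

open Multiset

variable {G : Type*} [AddGroup G] [DecidableEq G]

theorem mDiffs_replicate (k : ℕ) (a : G) :
    mDiffs (replicate k a) = replicate (k * (k - 1)) 0 := by
  rcases k with _ | k
  · simp [mDiffs]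
  · simp only [mDiffs, Multiset.bind, join, replicate_succ, map_cons, erase_cons_head, map_replicate,
      sub_self, sum_cons, sum_replicate, nsmul_replicate, add_tsub_cancel_right]
    rw [← replicate_add]
    congr 1
    ring

theorem count_mDiffs (B : Multiset G) (g : G) :
    (mDiffs B).count g = (B.map fun x => (B.erase x).count (-g + x)).sum := by
  refine count_bind.trans (congrArg sum (map_congr rfl fun x _ => ?_))
  simpa [sub_eq_iff_eq_add, neg_add_eq_iff_eq_add] using
    count_map_eq_count' (x - ·) (B.erase x) sub_right_injective (-g + x)

theorem count_mDiffs_univ_add_singleton [Fintype G] (c g : G) :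
    (mDiffs (Finset.univ.val + {c})).count g = if g = 0 then 2 else Fintype.card G + 2 := by
  rw [count_mDiffs, map_add, sum_add, map_singleton, sum_singleton]
  change ∑ x, _ + _ = _
  split_ifs with hg
  · subst hg
    simp
  · have hne (x : G) : -g + x ≠ x := fun h => hg (by simpa using h)
    simp [count_erase_of_ne (hne _), count_singleton, neg_add_eq_iff_eq_add,
      Finset.sum_add_distrib, hg]

end

theorem classic_harmonious_sdf_general {G : Type*} [AddGroup G] [Fintype G] [DecidableEq G]
    (k : ℕ) (hcard : Fintype.card G = k - 1) :
    (∀ g : G,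
      (((Multiset.replicate k ((Finset.univ.val : Multiset G) + {(0 : G)}) +
        {Multiset.replicate k (0 : G)}).bind mDiffs).count g) = k ^ 2 + k) ∧
    ((Multiset.replicate k ((Finset.univ.val : Multiset G) + {(0 : G)}) +
        {Multiset.replicate k (0 : G)}).map Multiset.card).sum = k ^ 2 + k := by
  obtain ⟨n, rfl⟩ : ∃ n, k = n + 1 := ⟨k - 1, by have := Fintype.card_pos (α := G); omega⟩
  rw [add_tsub_cancel_right] at hcard
  refine ⟨fun g => ?_, ?_⟩
  · rw [Multiset.add_bind, Multiset.singleton_bind, Multiset.count_add, Multiset.count_bind,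
      Multiset.map_replicate, Multiset.sum_replicate, smul_eq_mul, mDiffs_replicate,
      Multiset.count_replicate, count_mDiffs_univ_add_singleton, hcard,
      add_tsub_cancel_right]
    obtain rfl | hg := eq_or_ne g 0
    · simp only [if_true]
      ring
    · simp only [hg, hg.symm, if_false]
      ring
  · simp [hcard]
    ring

/-- If `G` has order `k - 1` (with `k ≥ 2`), then the family consisting of the block
`O_k` (zero repeated `k` times) together with `k` copies of the multiset `G ∪ {0}`
(all elements of `G`, with `0` taken twice) is a harmonious `(G, k, k² + k)`
strong difference family. -/
theorem classic_harmonious_sdf {G : Type*} [AddGroup G] [Fintype G] [DecidableEq G]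
    (k : ℕ) (hk : 2 ≤ k) (hcard : Fintype.card G = k - 1) :
    (∀ g : G,
      (((Multiset.replicate k ((Finset.univ.val : Multiset G) + {(0 : G)}) +
        {Multiset.replicate k (0 : G)}).bind mDiffs).count g) = k ^ 2 + k) ∧
    ((Multiset.replicate k ((Finset.univ.val : Multiset G) + {(0 : G)}) +
        {Multiset.replicate k (0 : G)}).map Multiset.card).sum = k ^ 2 + k :=
  classic_harmonious_sdf_general k hcard
end

section
/- Let G be a group of order k and let h > k + 1 be an integer. Define multisets X = O_k (zero repeated k times), Y = G (each element once), and Z = O_{h-k} ∪ G (zero repeated h - k additional times together with all of G). Then the family Σ consisting of h - k copies of X, h² - hk - 2h + k copies of Y, and k copies of Z is a harmonious (G, {k^{h(h-k-1)}, h^k}, hk(h-k)) strong difference family: its combined difference multiset covers every element of G exactly hk(h - k) times, it has h(h-k-1) blocks of size k and k blocks of size h, and the block sizes sum to hk(h - k). -/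
namespace Multiset

variable {α β : Type*}

theorem bind_const (s : Multiset α) (t : Multiset β) : s.bind (fun _ => t) = card s • t := by
  simp [bind, join]

theorem card_filter_replicate (p : α → Prop) [DecidablePred p] (n : ℕ) (a : α) :
    card ((replicate n a).filter p) = if p a then n else 0 := by
  split_ifs with ha
  · rw [filter_eq_self.2 fun b hb => eq_of_mem_replicate hb ▸ ha, card_replicate]
  · rw [filter_eq_nil.2 fun b hb => eq_of_mem_replicate hb ▸ ha, card_zero]

end Multiset

open Multiset

section CrossDiffs

variable {G : Type*} [AddGroup G]

def crossDiffs (A B : Multiset G) : Multiset G :=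
  A.bind fun x => B.map (x - ·)

theorem crossDiffs_add_left (A A' B : Multiset G) :
    crossDiffs (A + A') B = crossDiffs A B + crossDiffs A' B :=
  add_bind _ _ _

theorem crossDiffs_add_right (A B B' : Multiset G) :
    crossDiffs A (B + B') = crossDiffs A B + crossDiffs A B' := by
  simp only [crossDiffs, map_add, bind_add]

theorem crossDiffs_replicate (d e : ℕ) (a b : G) :
    crossDiffs (replicate d a) (replicate e b) = replicate (d * e) (a - b) := by
  have hconst : ∀ x ∈ replicate d a, (replicate e b).map (x - ·) = replicate e (a - b) :=
    fun x hx => by rw [eq_of_mem_replicate hx, map_replicate]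
  rw [crossDiffs, Multiset.bind_congr hconst, bind_const, card_replicate, nsmul_replicate]

theorem crossDiffs_univ_right [Fintype G] (A : Multiset G) :
    crossDiffs A Finset.univ.val = card A • Finset.univ.val := by
  rw [crossDiffs, ← bind_const]
  exact Multiset.bind_congr fun x _ => map_univ_val_equiv (Equiv.subLeft x)

theorem crossDiffs_univ_left [Fintype G] (A : Multiset G) :
    crossDiffs Finset.univ.val A = card A • Finset.univ.val := by
  rw [crossDiffs, bind_map_comm, ← bind_const]
  exact Multiset.bind_congr fun y _ => map_univ_val_equiv (Equiv.subRight y)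

theorem mDiffs_add_replicate_card [DecidableEq G] (B : Multiset G) :
    mDiffs B + replicate (card B) 0 = crossDiffs B B := by
  have hmap : ∀ x ∈ B, B.map (x - ·) = (0 : G) ::ₘ (B.erase x).map (x - ·) := fun x hx => by
    conv_lhs => rw [← cons_erase hx]
    rw [map_cons, sub_self]
  rw [crossDiffs, Multiset.bind_congr hmap, bind_cons, map_const', add_comm, mDiffs]

end CrossDiffs

section Blocks

variable {G : Type*} [AddGroup G] [DecidableEq G]

theorem count_mDiffs_add_ite (B : Multiset G) (g : G) :
    count g (mDiffs B) + (if g = 0 then card B else 0) = count g (crossDiffs B B) := by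
  rw [← mDiffs_add_replicate_card, count_add, count_replicate]
  simp only [eq_comm]

theorem count_mDiffs_replicate_zero (k : ℕ) (g : G) :
    count g (mDiffs (replicate k (0 : G))) = if g = 0 then k * (k - 1) else 0 := by
  have hc := count_mDiffs_add_ite (replicate k (0 : G)) g
  rw [crossDiffs_replicate, sub_zero, count_replicate, card_replicate] at hc
  by_cases hg : g = 0
  · subst hg
    simp only [if_true] at hc ⊢
    rw [Nat.mul_sub_one]; omega
  · simp only [hg, Ne.symm hg, if_false] at hc ⊢
    omega

theorem count_mDiffs_univ [Fintype G] (g : G) :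
    count g (mDiffs Finset.univ.val) = if g = 0 then 0 else Fintype.card G := by
  have hc := count_mDiffs_add_ite (Finset.univ.val : Multiset G) g
  rw [crossDiffs_univ_left, count_nsmul, count_univ, mul_one, Finset.card_val,
    Finset.card_univ] at hc
  split_ifs at hc ⊢ <;> omega

theorem count_mDiffs_replicate_zero_add_univ [Fintype G] (d : ℕ) (g : G) :
    count g (mDiffs (replicate d (0 : G) + Finset.univ.val)) =
      if g = 0 then d * (d + 1) else 2 * d + Fintype.card G := by
  have hc := count_mDiffs_add_ite (replicate d (0 : G) + Finset.univ.val) g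
  rw [crossDiffs_add_left, crossDiffs_add_right, crossDiffs_add_right, crossDiffs_replicate,
    crossDiffs_univ_left, crossDiffs_univ_right, crossDiffs_univ_left] at hc
  simp only [count_add, count_nsmul, count_univ, count_replicate, card_add, card_replicate,
    Finset.card_val, Finset.card_univ, sub_zero, mul_one] at hc
  by_cases hg : g = 0
  · subst hg
    simp only [if_true] at hc ⊢
    rw [Nat.mul_succ]; omega
  · simp only [hg, Ne.symm hg, if_false] at hc ⊢
    omega

end Blocks

theorem sq_sub_mul_sub_two_mul_add_add {k h : ℕ} (hh : k + 1 < h) :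
    h ^ 2 - h * k - 2 * h + k + 2 * (h - k) + k = h * (h - k) := by
  have hsq : h ^ 2 = h * k + h * (h - k) := by
    rw [← mul_add, Nat.add_sub_cancel' (by omega), sq]
  have h2 : h * 2 ≤ h * (h - k) := Nat.mul_le_mul_left h (by omega)
  omega

theorem mul_mul_sub_one_add_mul_mul_add_one (k d : ℕ) :
    d * (k * (k - 1)) + k * (d * (d + 1)) = (k + d) * k * d := by
  cases k <;> simp; ring

/-- For `G` of order `k` and `h > k + 1`, the family consisting of `h - k` copies
of `X = O_k`, `h² - hk - 2h + k` copies of `Y = G` and `k` copies of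
`Z = O_{h-k} ∪ G` is a harmonious `(G, {k^{h(h-k-1)}, h^k}, hk(h-k))` strong
difference family: its combined difference multiset covers every element of `G`
exactly `hk(h-k)` times, it has `h(h-k-1)` blocks of size `k` and `k` blocks of
size `h`, and the block sizes sum to `hk(h-k)`. -/
theorem fundamental_harmonious_sdf {G : Type*} [AddGroup G] [Fintype G] [DecidableEq G]
    (k h : ℕ) (hcard : Fintype.card G = k) (hh : k + 1 < h) :
    (∀ g : G,
      (((Multiset.replicate (h - k) (Multiset.replicate k (0 : G)) +
          Multiset.replicate (h ^ 2 - h * k - 2 * h + k) (Finset.univ.val : Multiset G) +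
          Multiset.replicate k
            (Multiset.replicate (h - k) (0 : G) + (Finset.univ.val : Multiset G))).bind
              mDiffs).count g) = h * k * (h - k)) ∧
    ((Multiset.replicate (h - k) (Multiset.replicate k (0 : G)) +
        Multiset.replicate (h ^ 2 - h * k - 2 * h + k) (Finset.univ.val : Multiset G) +
        Multiset.replicate k
          (Multiset.replicate (h - k) (0 : G) + (Finset.univ.val : Multiset G))).map
            Multiset.card).sum = h * k * (h - k) ∧
    Multiset.card
      (((Multiset.replicate (h - k) (Multiset.replicate k (0 : G)) +
        Multiset.replicate (h ^ 2 - h * k - 2 * h + k) (Finset.univ.val : Multiset G) +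
        Multiset.replicate k
          (Multiset.replicate (h - k) (0 : G) + (Finset.univ.val : Multiset G))).filter
            fun B => Multiset.card B = k)) = h * (h - k - 1) ∧
    Multiset.card
      (((Multiset.replicate (h - k) (Multiset.replicate k (0 : G)) +
        Multiset.replicate (h ^ 2 - h * k - 2 * h + k) (Finset.univ.val : Multiset G) +
        Multiset.replicate k
          (Multiset.replicate (h - k) (0 : G) + (Finset.univ.val : Multiset G))).filter
            fun B => Multiset.card B = h)) = k := by
  have hX : card (replicate k (0 : G)) = k := card_replicate k 0
  have hY : card (Finset.univ.val : Multiset G) = k := hcard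
  have hZ : card (replicate (h - k) (0 : G) + Finset.univ.val) = h := by
    rw [card_add, card_replicate, hY]; omega
  have hb := sq_sub_mul_sub_two_mul_add_add hh
  have hhd : h ≤ h * (h - k) := Nat.le_mul_of_pos_right h (by omega)
  have hkh : h ≠ k := by omega
  refine ⟨fun g => ?_, ?_, ?_, ?_⟩
  · simp only [count_bind, map_add, map_replicate, sum_add, sum_replicate, smul_eq_mul,
      count_mDiffs_replicate_zero, count_mDiffs_univ, count_mDiffs_replicate_zero_add_univ, hcard]
    split_ifs
    · have := mul_mul_sub_one_add_mul_mul_add_one k (h - k)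
      rw [Nat.add_sub_cancel' (by omega)] at this
      rw [mul_zero, add_zero, this]
    · calc _ = k * (h ^ 2 - h * k - 2 * h + k + 2 * (h - k) + k) := by ring
        _ = h * k * (h - k) := by rw [hb]; ring
  · simp only [map_add, map_replicate, sum_add, sum_replicate, card_replicate, hY, hZ, smul_eq_mul]
    calc _ = k * (h - k + (h ^ 2 - h * k - 2 * h + k) + h) := by ring
      _ = k * (h ^ 2 - h * k - 2 * h + k + 2 * (h - k) + k) := by congr 1; omega
      _ = h * k * (h - k) := by rw [hb]; ring
  · rw [filter_add, filter_add, card_add, card_add, card_filter_replicate, card_filter_replicate,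
      card_filter_replicate, hX, hY, hZ, if_pos rfl, if_pos rfl, if_neg hkh, Nat.mul_sub_one]
    omega
  · rw [filter_add, filter_add, card_add, card_add, card_filter_replicate, card_filter_replicate,
      card_filter_replicate, hX, hY, hZ, if_neg hkh.symm, if_neg hkh.symm, if_pos rfl, zero_add,
      zero_add]
end

section
/- Let H be a subgroup of order u of a finite group G of order v, and let F be a (G, H, K', 1) relative difference family. Then the collection consisting of all translates B + g (B ∈ F, g ∈ G) together with all right cosets of H in G is the block set of a linear space S(2, K, v), where K is the underlying set of K' ∪ {u}: every 2-subset of G is contained in exactly one block of this collection. -/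
/-!
A difference `x - y` is invariant under right translation of `x` and `y`, and it lies in `H`
exactly when `x` and `y` lie in a common right coset of `H`. So if `x - y ∈ H`, the pair lies
in the coset `H + x` and in no translate of a base block, since `x - y` is not a difference of
any base block. If `x - y ∉ H`, it occurs exactly once among the differences of `F`, as `a - b`
with `a, b ∈ B ∈ F`; then `B + (-a + x)` contains `x, y`, and any other translate `B' + g'`
containing them yields another occurrence unless `B' = B` and `g' = -a + x`.
-/

namespace Multiset

lemma eq_of_mem_bind_of_count_le_one {α β : Type*} [DecidableEq β] {s : Multiset α}
    {f : α → Multiset β} {d : β} (h : (s.bind f).count d ≤ 1) {a b : α}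
    (ha : a ∈ s) (hb : b ∈ s) (hda : d ∈ f a) (hdb : d ∈ f b) : a = b := by
  by_contra hne
  obtain ⟨t, rfl⟩ := exists_cons_of_mem ha
  obtain ⟨t', rfl⟩ := exists_cons_of_mem ((mem_cons.mp hb).resolve_left (Ne.symm hne))
  simp only [cons_bind, count_add] at h
  have := one_le_count_iff_mem.mpr hda
  have := one_le_count_iff_mem.mpr hdb
  omega

end Multiset

section DifferenceFamily

variable {G : Type*} [AddGroup G] [DecidableEq G]

lemma mem_map_sub_erase_val {B : Finset G} {a d : G} :
    d ∈ (B.val.erase a).map (a - ·) ↔ ∃ b ∈ B, a ≠ b ∧ a - b = d := by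
  simp only [Multiset.mem_map, ← Finset.erase_val, Finset.mem_val, Finset.mem_erase, and_assoc,
    ne_comm, and_left_comm (a := _ ∈ B)]

lemma mem_mDiffs {B : Finset G} {d : G} :
    d ∈ mDiffs B.val ↔ ∃ a ∈ B, ∃ b ∈ B, a ≠ b ∧ a - b = d := by
  simp only [mDiffs, Multiset.mem_bind, Finset.mem_val, mem_map_sub_erase_val]

lemma sub_mem_mDiffs_of_mem_image_add_right {B : Finset G} {g x y : G}
    (hx : x ∈ B.image (· + g)) (hy : y ∈ B.image (· + g)) (hxy : x ≠ y) :
    x - y ∈ mDiffs B.val := by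
  obtain ⟨a, ha, rfl⟩ := Finset.mem_image.mp hx
  obtain ⟨b, hb, rfl⟩ := Finset.mem_image.mp hy
  exact mem_mDiffs.mpr
    ⟨a, ha, b, hb, fun h => hxy (h ▸ rfl), (add_sub_add_right_eq_sub a b g).symm⟩

lemma exists_mem_image_add_right_of_sub_mem_mDiffs {B : Finset G} {x y : G}
    (h : x - y ∈ mDiffs B.val) : ∃ g, x ∈ B.image (· + g) ∧ y ∈ B.image (· + g) := by
  obtain ⟨a, ha, b, hb, -, hab⟩ := mem_mDiffs.mp h
  have hg : -a + x = -b + y :=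
    calc -a + x = -a + (x - y + y) := by rw [sub_add_cancel]
      _ = -a + (a - b + y) := by rw [hab]
      _ = -b + y := by rw [sub_eq_add_neg, add_assoc, neg_add_cancel_left]
  exact ⟨-a + x, Finset.mem_image.mpr ⟨a, ha, add_neg_cancel_left a x⟩,
    Finset.mem_image.mpr ⟨b, hb, by rw [hg, add_neg_cancel_left]⟩⟩

lemma eq_of_sub_eq_of_count_mDiffs_le_one {B : Finset G} {d a b a' b' : G}
    (h : (mDiffs B.val).count d ≤ 1) (ha : a ∈ B) (hb : b ∈ B) (ha' : a' ∈ B) (hb' : b' ∈ B)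
    (hab : a ≠ b) (hab' : a' ≠ b') (hd : a - b = d) (hd' : a' - b' = d) : a = a' :=
  Multiset.eq_of_mem_bind_of_count_le_one h ha ha'
    (mem_map_sub_erase_val.mpr ⟨b, hb, hab, hd⟩) (mem_map_sub_erase_val.mpr ⟨b', hb', hab', hd'⟩)

lemma image_add_right_eq_of_count_le_one {F : Multiset (Finset G)} {x y : G} (hxy : x ≠ y)
    (h : (F.bind fun B => mDiffs B.val).count (x - y) ≤ 1) {B B' : Finset G} (hB : B ∈ F)
    (hB' : B' ∈ F) {g g' : G} (hx : x ∈ B.image (· + g)) (hy : y ∈ B.image (· + g))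
    (hx' : x ∈ B'.image (· + g')) (hy' : y ∈ B'.image (· + g')) :
    B.image (· + g) = B'.image (· + g') := by
  obtain rfl : B = B' := Multiset.eq_of_mem_bind_of_count_le_one h hB hB'
    (sub_mem_mDiffs_of_mem_image_add_right hx hy hxy)
    (sub_mem_mDiffs_of_mem_image_add_right hx' hy' hxy)
  obtain ⟨a, ha, rfl⟩ := Finset.mem_image.mp hx
  obtain ⟨b, hb, rfl⟩ := Finset.mem_image.mp hy
  obtain ⟨a', ha', hxa'⟩ := Finset.mem_image.mp hx'
  obtain ⟨b', hb', hyb'⟩ := Finset.mem_image.mp hy'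
  have hab : a ≠ b := fun h => hxy (h ▸ rfl)
  have hab' : a' ≠ b' := fun h => hxy (by rw [← hxa', ← hyb', h])
  have hd' : a' - b' = a + g - (b + g) := by rw [← hxa', ← hyb', add_sub_add_right_eq_sub]
  obtain rfl : a' = a := eq_of_sub_eq_of_count_mDiffs_le_one
    ((Multiset.count_le_of_le _ (Multiset.le_bind F hB)).trans h) ha' hb' ha hb hab' hab hd'
    (add_sub_add_right_eq_sub a b g).symm
  rw [add_left_cancel hxa']

end DifferenceFamily

section RightCoset

variable {G : Type*} [AddGroup G] {H : AddSubgroup G}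

lemma sub_mem_of_add_neg_mem {g x y : G} (hx : x + -g ∈ H) (hy : y + -g ∈ H) : x - y ∈ H := by
  simpa [sub_eq_add_neg, add_assoc] using H.sub_mem hx hy

lemma add_neg_mem_iff_of_add_neg_mem {g x : G} (hx : x + -g ∈ H) (z : G) :
    z + -g ∈ H ↔ z + -x ∈ H := by
  rw [← H.add_mem_cancel_right hx (y := z + -x), add_assoc, neg_add_cancel_left]

end RightCoset

/-- If `F` is a `(G, H, K', 1)` relative difference family (its combined difference
lists cover every element of `G \ H` exactly once and no element of `H`), then the
translates `B + g` of the blocks of `F` together with the right cosets of `H` form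
the block set of a linear space: every pair of distinct points of `G` is contained
in exactly one of these blocks. -/
theorem relative_df_gives_linear_space {G : Type*} [AddGroup G] [Fintype G] [DecidableEq G]
    (H : AddSubgroup G) [DecidablePred (· ∈ H)]
    (F : Multiset (Finset G))
    (hDF : ∀ g : G, ((F.bind fun B => mDiffs B.val).count g) = if g ∈ H then 0 else 1)
    (x y : G) (hxy : x ≠ y) :
    ∃! C : Finset G,
      ((∃ B ∈ F, ∃ g : G, C = B.image (· + g)) ∨
        (∃ g : G, C = Finset.univ.filter fun z => z + -g ∈ H)) ∧
      x ∈ C ∧ y ∈ C := by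
  by_cases hH : x - y ∈ H
  · have hcount := (hDF (x - y)).trans (if_pos hH)
    refine ⟨Finset.univ.filter fun z => z + -x ∈ H, ⟨Or.inr ⟨x, rfl⟩, by simp, ?_⟩, ?_⟩
    · simpa [sub_eq_add_neg] using H.neg_mem hH
    rintro C ⟨⟨B, hB, g, rfl⟩ | ⟨g, rfl⟩, hx, hy⟩
    · exact Multiset.count_eq_zero.mp hcount
        (Multiset.mem_bind.mpr ⟨B, hB, sub_mem_mDiffs_of_mem_image_add_right hx hy hxy⟩) |>.elim
    · ext z
      simpa using add_neg_mem_iff_of_add_neg_mem (Finset.mem_filter.mp hx).2 z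
  · have hcount := (hDF (x - y)).trans (if_neg hH)
    obtain ⟨B, hB, hd⟩ := Multiset.mem_bind.mp (Multiset.count_pos.mp (hcount ▸ Nat.one_pos))
    obtain ⟨g, hx, hy⟩ := exists_mem_image_add_right_of_sub_mem_mDiffs hd
    refine ⟨B.image (· + g), ⟨Or.inl ⟨B, hB, g, rfl⟩, hx, hy⟩, ?_⟩
    rintro C ⟨⟨B', hB', g', rfl⟩ | ⟨g', rfl⟩, hx', hy'⟩
    · exact image_add_right_eq_of_count_le_one hxy hcount.le hB' hB hx' hy' hx hy
    · exact absurd (sub_mem_of_add_neg_mem (Finset.mem_filter.mp hx').2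
        (Finset.mem_filter.mp hy').2) hH
end

section
/- Let H be a subgroup of order u of a finite additive group G of order v, and let F be a resolvable (G, H, K', 1) relative difference family. Then P = {B + h : B ∈ F, h ∈ H} ∪ {H} is a (G, u·K' ∪ {u}, u) partitioned difference family: the blocks of P partition G and their combined difference multisets cover every nonzero element of G exactly u times. -/
theorem Multiset.count_bind_eq_countP {α β : Type*} [DecidableEq α] {m : Multiset β}
    {f : β → Multiset α} {a : α} (p : β → Prop) [DecidablePred p]
    (hf : ∀ b ∈ m, (f b).count a = if p b then 1 else 0) :
    (m.bind f).count a = m.countP p := by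
  induction m using Multiset.induction with
  | empty => simp
  | cons b m ih =>
    rw [Multiset.cons_bind, Multiset.count_add, Multiset.countP_cons,
      hf b (Multiset.mem_cons_self b m), ih fun c hc => hf c (Multiset.mem_cons_of_mem hc),
      add_comm]

section DifferenceFamily

variable {G : Type*} [AddGroup G] [DecidableEq G]

theorem mDiffs_map_add_right (m : Multiset G) (h : G) :
    mDiffs (m.map (· + h)) = mDiffs m := by
  have hinj : Function.Injective (· + h : G → G) := add_left_injective h
  simp only [mDiffs, Multiset.bind_map, ← Multiset.map_erase _ hinj, Multiset.map_map]
  refine Multiset.bind_congr fun x _ => Multiset.map_congr rfl fun y _ => ?_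
  simp [sub_eq_add_neg, add_assoc]

theorem count_mDiffs_of_ne_zero (s : Finset G) {g : G} (hg : g ≠ 0) :
    (mDiffs s.val).count g = s.val.countP fun x => -g + x ∈ s := by
  refine Multiset.count_bind_eq_countP _ fun x _ => ?_
  have hx : x - (-g + x) = g := by simp [sub_eq_add_neg, ← add_assoc]
  have hne : -g + x ≠ x := by simpa using hg
  conv_lhs => rw [← hx]
  rw [Multiset.count_map_eq_count' _ _ (sub_right_injective (b := x)),
    Multiset.count_erase_of_ne hne, Multiset.count_eq_of_nodup s.nodup]
  rfl

theorem count_mDiffs_addSubgroup [Fintype G] (H : AddSubgroup G) [DecidablePred (· ∈ H)]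
    {g : G} (hg : g ≠ 0) :
    (mDiffs (Finset.univ.filter (· ∈ H)).val).count g = if g ∈ H then Fintype.card H else 0 := by
  rw [count_mDiffs_of_ne_zero _ hg, Multiset.countP_eq_card_filter, ← Finset.filter_val,
    Finset.card_val, Fintype.card_subtype]
  split_ifs with hgH
  · congr 1
    ext x
    simp [H.add_mem_cancel_left (H.neg_mem hgH)]
  · refine Finset.card_eq_zero.2 (Finset.filter_eq_empty_iff.2 fun x hx hgx => hgH ?_)
    simp only [Finset.mem_filter, Finset.mem_univ, true_and] at hx hgx
    exact H.neg_mem_iff.1 ((H.add_mem_cancel_right hx).1 hgx)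

theorem bind_val_map_image_add_right (S B : Finset G) :
    (S.val.map fun h => B.image (· + h)).bind Finset.val =
      B.val.bind fun y => S.val.map (y + ·) := by
  simp only [Multiset.bind_map,
    Finset.image_val_of_injOn (add_left_injective _).injOn]
  exact Multiset.bind_map_comm _ _

theorem count_bind_map_add_left (m : Multiset G) (S : Finset G) (x : G) :
    (m.bind fun y => S.val.map (y + ·)).count x = m.countP fun y => -y + x ∈ S := by
  refine Multiset.count_bind_eq_countP _ fun y _ => ?_
  conv_lhs => rw [← add_neg_cancel_left y x]
  rw [Multiset.count_map_eq_count' _ _ (add_right_injective y),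
    Multiset.count_eq_of_nodup S.nodup]
  rfl

theorem count_bind_mDiffs_map_image_add_right (S B : Finset G) (g : G) :
    ((S.val.map fun h => B.image (· + h)).bind fun C => mDiffs C.val).count g =
      S.card * (mDiffs B.val).count g := by
  simp only [Multiset.bind_map, Multiset.count_bind,
    Finset.image_val_of_injOn (add_left_injective _).injOn, mDiffs_map_add_right,
    Multiset.map_const', Multiset.sum_replicate, smul_eq_mul, Finset.card_val]

end DifferenceFamily

/-- If `F` is a resolvable `(G, H, K', 1)` relative difference family (the multiset
union of its blocks is a complete system of representatives for the nontrivial left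
cosets of `H`), then `P = {B + h : B ∈ F, h ∈ H} ∪ {H}` is a `(G, u·K' ∪ {u}, u)`
partitioned difference family, where `u = |H|`: the blocks of `P` partition `G` and
their combined difference multisets cover every nonzero element of `G` exactly `u`
times. -/
theorem resolvable_df_gives_pdf {G : Type*} [AddGroup G] [Fintype G] [DecidableEq G]
    (H : AddSubgroup G) [DecidablePred (· ∈ H)]
    (F : Multiset (Finset G))
    (hDF : ∀ g : G, ((F.bind fun B => mDiffs B.val).count g) = if g ∈ H then 0 else 1)
    (hres : ∀ g : G,
      Multiset.card ((F.bind Finset.val).filter fun x => -g + x ∈ H) =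
        if g ∈ H then 0 else 1) :
    (((F.bind fun B => (Finset.univ.filter fun h => h ∈ H).val.map fun h =>
        B.image (· + h)) + {Finset.univ.filter fun h => h ∈ H}).bind Finset.val) =
      (Finset.univ.val : Multiset G) ∧
    ∀ g : G, g ≠ 0 →
      ((((F.bind fun B => (Finset.univ.filter fun h => h ∈ H).val.map fun h =>
        B.image (· + h)) + {Finset.univ.filter fun h => h ∈ H}).bind fun C =>
          mDiffs C.val).count g) = Fintype.card H := by
  simp only [Multiset.add_bind, Multiset.singleton_bind, Multiset.bind_assoc,
    bind_val_map_image_add_right, Multiset.count_add]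
  refine ⟨Multiset.ext.2 fun x => ?_, fun g hg => ?_⟩
  · have hcoset : ∀ y, -y + x ∈ Finset.univ.filter (· ∈ H) ↔ -x + y ∈ H := fun y => by
      rw [Finset.mem_filter, ← H.neg_mem_iff, neg_add_rev, neg_neg]
      simp
    rw [← Multiset.bind_assoc, Multiset.count_add, count_bind_map_add_left,
      Multiset.countP_eq_card_filter, Multiset.filter_congr fun y _ => hcoset y, hres,
      Multiset.count_eq_of_nodup (Finset.nodup _), Multiset.count_eq_of_nodup (Finset.nodup _)]
    split_ifs <;> simp_all
  · rw [Multiset.count_bind]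
    simp only [count_bind_mDiffs_map_image_add_right, Multiset.sum_map_mul_left,
      ← Multiset.count_bind, hDF, count_mDiffs_addSubgroup H hg, ← Fintype.card_subtype]
    split_ifs <;> simp
end

section
/- Let H be a subgroup of a finite additive group G and let F be a resolvable (G, H, K', 1)-DF, and set P = {B + h : B ∈ F, h ∈ H} ∪ {H}. Then the stabilizer of P under the right translation action of G equals H; in particular, if some g ∈ G satisfies P + g = P, then g ∈ H. -/
/-!
If `g ∉ H`, the difference-family condition writes `g = b₁ - b₂` with `b₁ ≠ b₂` in a block `B`,
and `P + g = P` forces `B + g ∈ P`. It is not `H`, which contains no difference outside `H`. If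
`B + g = B' + h`, the points `c₁ = b₁ + g - h`, `c₂ = b₂ + g - h` of `B'` realise the difference `g`
once more; as every difference occurs at most once, `c₁ = b₁`, i.e. `g = h ∈ H`.
-/

open Finset

theorem Multiset.disjoint_of_nodup_bind {α β : Type*} {s : Multiset α} {f : α → Multiset β}
    (h : (s.bind f).Nodup) {a b : α} (ha : a ∈ s) (hb : b ∈ s) (hab : a ≠ b) :
    Disjoint (f a) (f b) :=
  haveI : Std.Symm (Function.onFun Disjoint f) := ⟨fun _ _ h => h.symm⟩
  (Multiset.nodup_bind.mp h).2.forall ha hb hab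

section

variable {G : Type*} [AddGroup G] [DecidableEq G]

theorem eq_of_sub_eq_sub_of_nodup_mDiffs {F : Multiset (Finset G)}
    (hF : (F.bind fun B => mDiffs B.val).Nodup) {B B' : Finset G} (hB : B ∈ F) (hB' : B' ∈ F)
    {b₁ b₂ c₁ c₂ : G} (hb₁ : b₁ ∈ B) (hb₂ : b₂ ∈ B) (hc₁ : c₁ ∈ B') (hc₂ : c₂ ∈ B')
    (hb : b₁ ≠ b₂) (hc : c₁ ≠ c₂) (h : b₁ - b₂ = c₁ - c₂) : b₁ = c₁ := by
  have sub_mem {C : Finset G} {x y : G} (hy : y ∈ C) (hxy : x ≠ y) :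
      x - y ∈ (C.val.erase x).map (x - ·) :=
    Multiset.mem_map_of_mem _ ((Multiset.mem_erase_of_ne hxy.symm).mpr hy)
  have hbB := sub_mem hb₂ hb
  have hcB' := h ▸ sub_mem hc₂ hc
  by_contra hbc
  by_cases hBB' : B = B'
  · subst hBB'
    have hnodup : (mDiffs B.val).Nodup := (Multiset.nodup_bind.mp hF).1 B hB
    exact Multiset.disjoint_left.mp (Multiset.disjoint_of_nodup_bind hnodup hb₁ hc₁ hbc) hbB hcB'
  · exact Multiset.disjoint_left.mp (Multiset.disjoint_of_nodup_bind hF hB hB' hBB')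
      (Multiset.mem_bind.mpr ⟨b₁, hb₁, hbB⟩) (Multiset.mem_bind.mpr ⟨c₁, hc₁, hcB'⟩)

theorem eq_of_image_add_right_eq_of_nodup_mDiffs {F : Multiset (Finset G)}
    (hF : (F.bind fun B => mDiffs B.val).Nodup) {B B' : Finset G} (hB : B ∈ F) (hB' : B' ∈ F)
    {b₁ b₂ g h : G} (hb₁ : b₁ ∈ B) (hb₂ : b₂ ∈ B) (hb : b₁ ≠ b₂)
    (hgh : B.image (· + g) = B'.image (· + h)) : g = h := by
  obtain ⟨c₁, hc₁, hc₁g⟩ := Finset.mem_image.mp (hgh ▸ Finset.mem_image_of_mem (· + g) hb₁)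
  obtain ⟨c₂, hc₂, hc₂g⟩ := Finset.mem_image.mp (hgh ▸ Finset.mem_image_of_mem (· + g) hb₂)
  have hc : c₁ ≠ c₂ := by
    rintro rfl
    exact hb (add_right_cancel (hc₁g.symm.trans hc₂g))
  have hsub : b₁ - b₂ = c₁ - c₂ := by
    rw [← add_sub_add_right_eq_sub b₁ b₂ g, ← hc₁g, ← hc₂g, add_sub_add_right_eq_sub]
  have hbc := eq_of_sub_eq_sub_of_nodup_mDiffs hF hB hB' hb₁ hb₂ hc₁ hc₂ hb hc hsub
  subst hbc
  exact (add_left_cancel hc₁g).symm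

end

section

variable {G : Type*} [AddGroup G] [Fintype G] [DecidableEq G]
  (F : Multiset (Finset G)) (H : AddSubgroup G) [DecidablePred (· ∈ H)]

/-- The family `P = {B + h : B ∈ F, h ∈ H} ∪ {H}`. -/
def pdfBlocks : Multiset (Finset G) :=
  (F.bind fun B => (univ.filter (· ∈ H)).val.map fun h => B.image (· + h)) +
    {univ.filter (· ∈ H)}

variable {F H}

theorem mem_pdfBlocks {C : Finset G} :
    C ∈ pdfBlocks F H ↔
      (∃ B ∈ F, ∃ h ∈ H, B.image (· + h) = C) ∨ C = univ.filter (· ∈ H) := by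
  simp [pdfBlocks]

theorem image_add_right_filter_mem_eq {g : G} (hg : g ∈ H) :
    (univ.filter (· ∈ H)).image (· + g) = univ.filter (· ∈ H) := by
  ext x
  simp only [mem_image, mem_filter, mem_univ, true_and]
  exact ⟨fun ⟨y, hy, hx⟩ => hx ▸ H.add_mem hy hg,
    fun hx => ⟨x - g, H.sub_mem hx hg, sub_add_cancel x g⟩⟩

theorem map_add_right_pdfBlocks_of_mem {g : G} (hg : g ∈ H) :
    (pdfBlocks F H).map (·.image (· + g)) = pdfBlocks F H := by
  have hval : (univ.filter (· ∈ H)).val.map (· + g) = (univ.filter (· ∈ H)).val := by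
    rw [← Finset.image_val_of_injOn (add_left_injective g).injOn, image_add_right_filter_mem_eq hg]
  simp only [pdfBlocks, Multiset.map_add, Multiset.map_singleton, Multiset.map_bind,
    Multiset.map_map, image_add_right_filter_mem_eq hg]
  congr 1
  refine Multiset.bind_congr fun B _ => ?_
  conv_rhs => rw [← hval, Multiset.map_map]
  refine Multiset.map_congr rfl fun h _ => ?_
  simp only [Function.comp_apply, image_image, Function.comp_def, add_assoc]

theorem mem_of_map_add_right_pdfBlocks_eq
    (hF : (F.bind fun B => mDiffs B.val).Nodup)
    (hcover : ∀ g ∉ H, g ∈ F.bind fun B => mDiffs B.val) {g : G}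
    (hg : (pdfBlocks F H).map (·.image (· + g)) = pdfBlocks F H) : g ∈ H := by
  by_contra hgH
  obtain ⟨B, hB, hgB⟩ := Multiset.mem_bind.mp (hcover g hgH)
  obtain ⟨b₁, hb₁, hgb₁⟩ := Multiset.mem_bind.mp hgB
  obtain ⟨b₂, hb₂erase, hgb⟩ := Multiset.mem_map.mp hgb₁
  obtain ⟨hb, hb₂⟩ := B.nodup.mem_erase_iff.mp hb₂erase
  have hBg : B.image (· + g) ∈ pdfBlocks F H :=
    hg ▸ Multiset.mem_map_of_mem _ (mem_pdfBlocks.mpr (.inl ⟨B, hB, 0, H.zero_mem, by simp⟩))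
  rcases mem_pdfBlocks.mp hBg with ⟨B', hB', h, hh, hB'h⟩ | hBH
  · exact hgH (eq_of_image_add_right_eq_of_nodup_mDiffs hF hB hB' hb₁ hb₂ hb.symm hB'h.symm ▸ hh)
  · have hmem (b) (hb : b ∈ B) : b + g ∈ H := by
      simpa [hBH] using Finset.mem_image_of_mem (· + g) hb
    have := H.sub_mem (hmem b₁ hb₁) (hmem b₂ hb₂)
    rw [add_sub_add_right_eq_sub, hgb] at this
    exact hgH this

end

theorem stabilizer_of_pdf_eq_subgroup_general {G : Type*} [AddGroup G] [Fintype G] [DecidableEq G]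
    (H : AddSubgroup G) [DecidablePred (· ∈ H)]
    (F : Multiset (Finset G))
    (hDF : ∀ g : G, ((F.bind fun B => mDiffs B.val).count g) = if g ∈ H then 0 else 1) :
    ∀ g : G,
      (((F.bind fun B => (Finset.univ.filter fun h => h ∈ H).val.map fun h =>
          B.image (· + h)) + {Finset.univ.filter fun h => h ∈ H}).map fun C =>
            C.image (· + g)) =
        ((F.bind fun B => (Finset.univ.filter fun h => h ∈ H).val.map fun h =>
          B.image (· + h)) + {Finset.univ.filter fun h => h ∈ H}) ↔ g ∈ H := by
  have hnodup : (F.bind fun B => mDiffs B.val).Nodup :=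
    Multiset.nodup_iff_count_le_one.mpr fun g => by rw [hDF g]; split_ifs <;> simp
  have hcover (g : G) (hg : g ∉ H) : g ∈ F.bind fun B => mDiffs B.val := by
    rw [← Multiset.count_pos, hDF g, if_neg hg]
    exact Nat.one_pos
  exact fun g => ⟨mem_of_map_add_right_pdfBlocks_eq hnodup hcover,
    map_add_right_pdfBlocks_of_mem⟩

/-- Let `F` be a resolvable `(G, H, K', 1)` relative difference family and let
`P = {B + h : B ∈ F, h ∈ H} ∪ {H}`. Then the stabilizer of `P` under the right
translation action of `G` is exactly `H`: for every `g ∈ G`, `P + g = P` if and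
only if `g ∈ H`. -/
theorem stabilizer_of_pdf_eq_subgroup {G : Type*} [AddGroup G] [Fintype G] [DecidableEq G]
    (H : AddSubgroup G) [DecidablePred (· ∈ H)]
    (F : Multiset (Finset G))
    (hDF : ∀ g : G, ((F.bind fun B => mDiffs B.val).count g) = if g ∈ H then 0 else 1)
    (hres : ∀ g : G,
      Multiset.card ((F.bind Finset.val).filter fun x => -g + x ∈ H) =
        if g ∈ H then 0 else 1) :
    ∀ g : G,
      (((F.bind fun B => (Finset.univ.filter fun h => h ∈ H).val.map fun h =>
          B.image (· + h)) + {Finset.univ.filter fun h => h ∈ H}).map fun C =>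
            C.image (· + g)) =
        ((F.bind fun B => (Finset.univ.filter fun h => h ∈ H).val.map fun h =>
          B.image (· + h)) + {Finset.univ.filter fun h => h ∈ H}) ↔ g ∈ H :=
  stabilizer_of_pdf_eq_subgroup_general H F hDF
end

section
/- Let G be a finite group, q a prime power with q ≡ 1 (mod λ), and suppose a (G, K, λ) strong difference family Σ admits a good lifting L to G × F_q with good companion set S (i.e., |S| = (q-1)/λ and S·Δ_g = F_q^* for every g ∈ G, where ΔL = ⋃_{g∈G} {g} × Δ_g). Then F = {B_s : B ∈ L, s ∈ S}, where B_s is obtained from B by multiplying second coordinates by s, is a (G × F_q, G × {0}, nK, 1) relative difference family with n = (q-1)/λ: the combined difference lists of F cover every element of (G × F_q) \ (G × {0}) exactly once. -/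
/-!
Every `s ∈ S` is nonzero: `S·Δ_g` contains `1`, so `Δ_g` is nonempty, and `0 ∈ S` would put
`0 = 0·δ` into `S·Δ_g`. Hence `p ↦ (p.1, s * p.2)` is an injective additive map, so the difference
list of `B_s` is that of `B` with second coordinates scaled by `s`. The combined difference list of
the family is therefore `⋃_{s ∈ S} s·ΔL = ⋃_{g ∈ G} {g} × S·Δ_g`, and `S·Δ_g = F^*` is the claim.
-/

open Multiset

theorem mDiffs_map {G H : Type*} [AddGroup G] [AddGroup H] [DecidableEq G] [DecidableEq H]
    (f : G →+ H) (B : Multiset G) : mDiffs (B.map f) = (mDiffs B).map f := by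
  unfold mDiffs
  rw [bind_map, map_bind]
  refine bind_congr fun x hx => ?_
  rw [← map_erase_of_mem f B hx, map_map, map_map]
  exact map_congr rfl fun y _ => (map_sub f x y).symm

section Lifting

variable {G F : Type*} [DecidableEq G]

theorem mDiffs_image_mul_snd [AddGroup G] [Ring F] [NoZeroDivisors F] [DecidableEq F] {s : F}
    (hs : s ≠ 0) (B : Finset (G × F)) :
    mDiffs (B.image fun p => (p.1, s * p.2)).val = (mDiffs B.val).map fun p => (p.1, s * p.2) := by
  have hinj : Function.Injective fun p : G × F => (p.1, s * p.2) :=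
    Function.injective_id.prodMap (mul_right_injective₀ hs)
  rw [Finset.image_val_of_injOn hinj.injOn]
  exact mDiffs_map ((AddMonoidHom.id G).prodMap (AddMonoidHom.mulLeft s)) B.val

theorem mDiffs_bind_image_mul_snd [AddGroup G] [Ring F] [NoZeroDivisors F] [DecidableEq F]
    {S : Finset F} (hS : (0 : F) ∉ S) (L : Multiset (Finset (G × F))) :
    ((L.bind fun B => S.val.map fun s => B.image fun p => (p.1, s * p.2)).bind
        fun C => mDiffs C.val) =
      S.val.bind fun s => (L.bind fun B => mDiffs B.val).map fun p => (p.1, s * p.2) := by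
  calc _ = L.bind fun B => S.val.bind fun s => (mDiffs B.val).map fun p => (p.1, s * p.2) := by
        rw [Multiset.bind_assoc]
        refine bind_congr fun B _ => ?_
        rw [bind_map]
        exact bind_congr fun s hs => mDiffs_image_mul_snd (ne_of_mem_of_not_mem hs hS) B
    _ = _ := by
        rw [bind_bind]
        exact bind_congr fun s _ => (map_bind _ _ _).symm

/-- `Δ_g` in the decomposition `D = ⋃_{g ∈ G} {g} × Δ_g`. -/
def sndFiber (D : Multiset (G × F)) (g : G) : Multiset F :=
  (D.filter (·.1 = g)).map Prod.snd

theorem count_map_mul_snd [Mul F] [DecidableEq F] (D : Multiset (G × F)) (s : F) (g : G) (t : F) :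
    count (g, t) (D.map fun p => (p.1, s * p.2)) = count t ((sndFiber D g).map (s * ·)) := by
  rw [sndFiber, map_map, count_map, count_map, filter_filter]
  congr 1
  refine filter_congr fun p _ => ?_
  simp [Prod.ext_iff, eq_comm, and_comm]

end Lifting

theorem zero_notMem_of_count_bind_mul {F : Type*} [MulZeroOneClass F] [Nontrivial F]
    [DecidableEq F] {S : Finset F} {D : Multiset F}
    (h : ∀ t, count t (S.val.bind fun s => D.map (s * ·)) = if t = 0 then 0 else 1) :
    (0 : F) ∉ S := by
  intro h0
  obtain ⟨s, -, hs⟩ := mem_bind.1 (count_pos.1 (by rw [h 1, if_neg one_ne_zero]; exact one_pos))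
  obtain ⟨d, hd, -⟩ := mem_map.1 hs
  have : 0 < count 0 (S.val.bind fun s => D.map (s * ·)) :=
    count_pos.2 (mem_bind.2 ⟨0, h0, mem_map.2 ⟨d, hd, zero_mul d⟩⟩)
  simp [h 0] at this

theorem good_lifting_gives_relative_df_general {G F : Type*} [AddGroup G] [DecidableEq G]
    [Field F] [DecidableEq F]
    (L : Multiset (Finset (G × F)))
    (S : Finset F)
    (hgood : ∀ g : G, ∀ t : F,
      ((S.val.bind fun s =>
        (((L.bind fun B => mDiffs B.val).filter fun p => p.1 = g).map fun p =>
          s * p.2)).count t) = if t = 0 then 0 else 1) :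
    ∀ x : G × F,
      (((L.bind fun B => S.val.map fun s => B.image fun p => (p.1, s * p.2)).bind
        fun C => mDiffs C.val).count x) = if x.2 = 0 then 0 else 1 := by
  have hΔ : ∀ g t, count t (S.val.bind fun s =>
      (sndFiber (L.bind fun B => mDiffs B.val) g).map (s * ·)) = if t = 0 then 0 else 1 := by
    simpa only [sndFiber, map_map, Function.comp_def] using hgood
  rintro ⟨g, t⟩
  rw [mDiffs_bind_image_mul_snd (zero_notMem_of_count_bind_mul (hΔ 0)) L, count_bind, ← hΔ g t,
    count_bind]
  simp only [count_map_mul_snd]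

/-- Lifting construction: if a `(G, K, λ)` strong difference family `Σ` admits a good
lifting `L` to `G × F_q` with good companion `S` (of size `(q-1)/λ`, with
`S·Δ_g = F_q^*` for every `g ∈ G`), then the family `{B_s : B ∈ L, s ∈ S}`, where
`B_s` multiplies the second coordinates of `B` by `s`, is a relative difference
family over `G × {0}`: its combined difference lists cover every element of
`(G × F_q) \ (G × {0})` exactly once and no element of `G × {0}`. -/
theorem good_lifting_gives_relative_df {G F : Type*} [AddGroup G] [Fintype G] [DecidableEq G]
    [Field F] [Fintype F] [DecidableEq F]
    (lam : ℕ) (Sig : Multiset (Multiset G))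
    (hSDF : ∀ g : G, ((Sig.bind mDiffs).count g) = lam)
    (L : Multiset (Finset (G × F)))
    (hlift : L.map (fun B => B.val.map Prod.fst) = Sig)
    (S : Finset F) (hScard : S.card * lam = Fintype.card F - 1)
    (hgood : ∀ g : G, ∀ t : F,
      ((S.val.bind fun s =>
        (((L.bind fun B => mDiffs B.val).filter fun p => p.1 = g).map fun p =>
          s * p.2)).count t) = if t = 0 then 0 else 1) :
    ∀ x : G × F,
      (((L.bind fun B => S.val.map fun s => B.image fun p => (p.1, s * p.2)).bind
        fun C => mDiffs C.val).count x) = if x.2 = 0 then 0 else 1 :=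
  good_lifting_gives_relative_df_general L S hgood
end

section
/- Let X, Y be finite groups and Z = X × Y. Given a resolvable (G × X, G × {0}, K₁, 1)-DF F_X, a resolvable (G × Y, G × {0}, K₂, 1)-DF F_Y, and a homogeneous (Y, max(K₁), 1) difference matrix M, the family consisting of all blocks B∘M^c = {(g_i, x_i, m_{ic}) : i} for B = {(g_i,x_i)} ∈ F_X and columns c of M, together with all blocks {(g_i, 0, y_i)} for {(g_i, y_i)} ∈ F_Y, is a resolvable (G × Z, G × {0}, K, 1)-DF with K = |Y| copies of K₁ together with K₂. -/
/-! Let `B = (b_0, …, b_{k-1})` be a block of `F_X`. For positions `i ≠ j` the third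
coordinate of the difference of the `i`-th and `j`-th points of `B ∘ M^c` is `M i c - M j c`,
which runs over `Y` exactly once as the column `c` varies, because `M` is a difference matrix;
by homogeneity `M i c` itself runs over `Y`. So the blocks `B ∘ M^c` together carry every
difference of `B`, and every point of `B`, paired with every `y ∈ Y` exactly once. Hence the
lifted blocks of `F_X` account for the elements `(g, x, y)` with `x ≠ 0`, and the embedded
blocks of `F_Y` for those with `x = 0`, `y ≠ 0`. -/

open Multiset Function

lemma List.Nodup.map_zipIdx {α β : Type*} [BEq α] [LawfulBEq α] {l : List α} (hl : l.Nodup)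
    (f : α × ℕ → β) : l.zipIdx.map f = l.map fun a => f (a, l.idxOf a) := by
  refine List.ext_getElem (by simp) fun i _ _ => ?_
  simp [List.getElem_zipIdx, hl.idxOf_getElem]

section mDiffs
variable {G H : Type*} [AddGroup G] [DecidableEq G] [AddGroup H] [DecidableEq H]

omit [AddGroup G] in
lemma mDiffs_map_of_injective {f : G → H} (hf : Injective f) (s : Multiset G) :
    mDiffs (s.map f) = s.bind fun a => (s.erase a).map fun b => f a - f b := by
  rw [mDiffs, bind_map]
  refine Multiset.bind_congr fun a _ => ?_
  rw [← map_erase f hf, map_map]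
  rfl

lemma mDiffs_map_addMonoidHom (f : G →+ H) (hf : Injective f) (s : Multiset G) :
    mDiffs (s.map f) = (mDiffs s).map f := by
  rw [mDiffs_map_of_injective hf]
  simp only [mDiffs, map_bind, map_map, comp_def, map_sub]

end mDiffs

section prodUniv
variable {α G X Y : Type*} [Fintype Y]

def prodUniv (s : Multiset (G × X)) : Multiset (G × X × Y) :=
  s.bind fun d => (Finset.univ : Finset Y).val.map fun y => (d.1, d.2, y)

lemma prodUniv_bind (s : Multiset α) (f : α → Multiset (G × X)) :
    (prodUniv (s.bind f) : Multiset (G × X × Y)) = s.bind fun a => prodUniv (f a) :=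
  bind_assoc

variable [DecidableEq X] [DecidableEq Y]

variable [DecidableEq G] in
lemma count_prodUniv (s : Multiset (G × X)) (p : G × X × Y) :
    count p (prodUniv s) = count (p.1, p.2.1) s := by
  induction s using Multiset.induction with
  | empty => simp [prodUniv]
  | cons d s ih =>
    rw [prodUniv, cons_bind, count_add, ← prodUniv, ih, count_cons, add_comm]
    congr 1
    obtain ⟨g, x, y⟩ := p
    by_cases h : (g, x) = d
    · subst h
      rw [if_pos rfl]
      exact (count_map_eq_count' (fun y => (g, x, y)) _ (fun y y' h => by simpa using h) y).trans
        (count_univ y)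
    · rw [if_neg h, count_eq_zero]
      simp only [mem_map, not_exists, not_and]
      intro y' _ h'
      simp_all [Prod.ext_iff]

lemma card_filter_prodUniv (s : Multiset (G × X)) (z : X × Y) :
    card ((prodUniv s).filter fun p => p.2 = z) = card (s.filter fun d => d.2 = z.1) := by
  induction s using Multiset.induction with
  | empty => simp [prodUniv]
  | cons d s ih =>
    rw [prodUniv, cons_bind, filter_add, card_add, ← prodUniv, ih, filter_cons, card_add]
    congr 1
    rw [filter_map, card_map]
    by_cases h : d.2 = z.1
    · simp [h, Prod.ext_iff, filter_eq']
    · simp [h, Prod.ext_iff]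

end prodUniv

section zeroMid
variable (G X Y : Type*) [AddZeroClass G] [AddZeroClass X] [AddZeroClass Y]

def zeroMid : G × Y →+ G × X × Y :=
  (AddMonoidHom.fst G Y).prod ((AddMonoidHom.inr X Y).comp (AddMonoidHom.snd G Y))

variable {G X Y}

@[simp]
lemma zeroMid_apply (q : G × Y) : zeroMid G X Y q = (q.1, 0, q.2) := rfl

lemma zeroMid_injective : Injective (zeroMid G X Y) :=
  fun a b h => by simpa [Prod.ext_iff] using h

variable [DecidableEq G] [DecidableEq X] [DecidableEq Y]

lemma count_map_zeroMid (s : Multiset (G × Y)) (p : G × X × Y) :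
    count p (s.map (zeroMid G X Y)) = if p.2.1 = 0 then count (p.1, p.2.2) s else 0 := by
  obtain ⟨g, x, y⟩ := p
  split_ifs with hx
  · subst hx
    exact count_map_eq_count' _ s zeroMid_injective (g, y)
  · refine count_eq_zero.mpr fun hmem => ?_
    obtain ⟨q, -, hq⟩ := mem_map.mp hmem
    exact hx (congrArg (·.2.1) hq).symm

lemma image_zeroMid_val (B : Finset (G × Y)) :
    (B.image (zeroMid G X Y)).val = B.val.map (zeroMid G X Y) :=
  Finset.image_val_of_injOn zeroMid_injective.injOn

omit [DecidableEq G] in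
lemma card_filter_map_zeroMid (s : Multiset (G × Y)) (z : X × Y) :
    card ((s.map (zeroMid G X Y)).filter fun p => p.2 = z) =
      if z.1 = 0 then card (s.filter fun q => q.2 = z.2) else 0 := by
  rw [filter_map, card_map]
  obtain ⟨x, y⟩ := z
  split_ifs with hx
  · subst hx
    simp [comp_def]
  · simp [comp_def, Ne.symm hx]

end zeroMid

lemma injective_prodMk_fst_snd {G X Y : Type*} (f : G × X → Y) :
    Injective fun e : G × X => (e.1, e.2, f e) :=
  fun a b h => by
    simp only [Prod.mk.injEq] at h
    exact Prod.ext h.1 h.2.1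

section composeBlock
variable {G X Y : Type*} [DecidableEq G] [DecidableEq X] [Fintype Y] [DecidableEq Y]
  (M : ℕ → Fin (Fintype.card Y) → Y) {B : List (G × X)}

def composeBlock (B : List (G × X)) (c : Fin (Fintype.card Y)) : Finset (G × X × Y) :=
  (B.zipIdx.map fun q => (q.1.1, q.1.2, M q.2 c)).toFinset

lemma composeBlock_val (hB : B.Nodup) (c : Fin (Fintype.card Y)) :
    (composeBlock M B c).val =
      (B : Multiset (G × X)).map fun e => (e.1, e.2, M (B.idxOf e) c) := by
  rw [composeBlock, hB.map_zipIdx, List.toFinset_val]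
  dsimp only
  rw [(hB.map (injective_prodMk_fst_snd _)).dedup, map_coe]

lemma card_composeBlock (hB : B.Nodup) (c : Fin (Fintype.card Y)) :
    (composeBlock M B c).card = B.length := by
  rw [Finset.card_def, composeBlock_val M hB, card_map, coe_card]

lemma bind_composeBlock_val (hB : B.Nodup) (hM : ∀ r < B.length, Bijective (M r)) :
    (Finset.univ.val.bind fun c => (composeBlock M B c).val) =
      prodUniv (B : Multiset (G × X)) := by
  simp only [composeBlock_val M hB, prodUniv]
  rw [bind_map_comm]
  refine Multiset.bind_congr fun e he => ?_
  have hrow := hM _ (List.idxOf_lt_length_iff.mpr (mem_coe.mp he))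
  rw [← (bijective_iff_map_univ_eq_univ _).mp hrow, map_map]
  rfl

variable [AddGroup G] [AddGroup X] [AddGroup Y]

lemma bind_mDiffs_composeBlock (hB : B.Nodup)
    (hM : ∀ r < B.length, ∀ r' < B.length, r ≠ r' → Bijective fun c => M r c - M r' c) :
    (Finset.univ.val.bind fun c => mDiffs (composeBlock M B c).val) =
      prodUniv (mDiffs (B : Multiset (G × X))) := by
  simp only [composeBlock_val M hB, mDiffs_map_of_injective (injective_prodMk_fst_snd _)]
  simp only [prodUniv, mDiffs, Multiset.bind_assoc, Multiset.bind_map]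
  rw [bind_bind]
  refine Multiset.bind_congr fun a ha => ?_
  rw [bind_map_comm]
  refine Multiset.bind_congr fun b hb => ?_
  have hBnodup : (B : Multiset (G × X)).Nodup := hB
  obtain ⟨hba, hb⟩ := hBnodup.mem_erase_iff.mp hb
  have hidx : B.idxOf a ≠ B.idxOf b := fun h => hba ((List.idxOf_inj (mem_coe.mp hb)).mp h.symm)
  have hcol := hM _ (List.idxOf_lt_length_iff.mpr (mem_coe.mp ha)) _
    (List.idxOf_lt_length_iff.mpr (mem_coe.mp hb)) hidx
  rw [← (bijective_iff_map_univ_eq_univ _).mp hcol, map_map]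
  rfl

end composeBlock

section composedFamily
variable {G X Y : Type*} [AddGroup G] [DecidableEq G] [AddGroup X] [DecidableEq X]
  [AddGroup Y] [Fintype Y] [DecidableEq Y]
  (FX : Multiset (List (G × X))) (FY : Multiset (Finset (G × Y)))
  (M : ℕ → Fin (Fintype.card Y) → Y)

def composedFamily : Multiset (Finset (G × X × Y)) :=
  (FX.bind fun B => Finset.univ.val.map (composeBlock M B)) +
    FY.map fun B => B.image (zeroMid G X Y)

lemma count_mDiffs_composedFamily (hFX : ∀ B ∈ FX, B.Nodup)
    (hM : ∀ B ∈ FX, ∀ r < B.length, ∀ r' < B.length, r ≠ r' →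
      Bijective fun c => M r c - M r' c) (p : G × X × Y) :
    count p ((composedFamily FX FY M).bind fun C => mDiffs C.val) =
      count (p.1, p.2.1) (FX.bind fun B => mDiffs (B : Multiset (G × X))) +
        if p.2.1 = 0 then count (p.1, p.2.2) (FY.bind fun B => mDiffs B.val) else 0 := by
  have hdevelop : ((FX.bind fun B => Finset.univ.val.map (composeBlock M B)).bind
      fun C => mDiffs C.val) = prodUniv (FX.bind fun B => mDiffs (B : Multiset (G × X))) := by
    rw [prodUniv_bind, Multiset.bind_assoc]
    refine Multiset.bind_congr fun B hB => ?_
    rw [Multiset.bind_map]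
    exact bind_mDiffs_composeBlock M (hFX B hB) (hM B hB)
  have hembed : ((FY.map fun B => B.image (zeroMid G X Y)).bind fun C => mDiffs C.val) =
      (FY.bind fun B => mDiffs B.val).map (zeroMid G X Y) := by
    simp only [Multiset.bind_map, image_zeroMid_val,
      mDiffs_map_addMonoidHom (zeroMid G X Y) zeroMid_injective, Multiset.map_bind]
  rw [composedFamily, add_bind, count_add, hdevelop, hembed, count_prodUniv, count_map_zeroMid]

lemma card_filter_composedFamily (hFX : ∀ B ∈ FX, B.Nodup)
    (hM : ∀ B ∈ FX, ∀ r < B.length, Bijective (M r)) (z : X × Y) :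
    card (((composedFamily FX FY M).bind Finset.val).filter fun p => p.2 = z) =
      card ((FX.bind fun B => (B : Multiset (G × X))).filter fun d => d.2 = z.1) +
        if z.1 = 0 then card ((FY.bind Finset.val).filter fun q => q.2 = z.2) else 0 := by
  have hdevelop : ((FX.bind fun B => Finset.univ.val.map (composeBlock M B)).bind Finset.val) =
      prodUniv (FX.bind fun B => (B : Multiset (G × X))) := by
    rw [prodUniv_bind, Multiset.bind_assoc]
    refine Multiset.bind_congr fun B hB => ?_
    rw [Multiset.bind_map]
    exact bind_composeBlock_val M (hFX B hB) (hM B hB)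
  have hembed : ((FY.map fun B => B.image (zeroMid G X Y)).bind Finset.val) =
      (FY.bind Finset.val).map (zeroMid G X Y) := by
    simp only [Multiset.bind_map, image_zeroMid_val, Multiset.map_bind]
  rw [composedFamily, add_bind, filter_add, card_add, hdevelop, hembed, card_filter_prodUniv,
    card_filter_map_zeroMid]

lemma map_card_composedFamily (hFX : ∀ B ∈ FX, B.Nodup) :
    (composedFamily FX FY M).map Finset.card =
      (FX.bind fun B => replicate (Fintype.card Y) B.length) + FY.map Finset.card := by
  rw [composedFamily, map_add, map_bind, map_map]
  congr 1
  · refine Multiset.bind_congr fun B hB => ?_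
    have hcard : ∀ c ∈ Finset.univ.val, (Finset.card ∘ composeBlock M B) c = B.length :=
      fun c _ => card_composeBlock M (hFX B hB) c
    rw [map_map, map_congr rfl hcard, map_const', Finset.card_val, Finset.card_univ,
      Fintype.card_fin]
  · exact map_congr rfl fun B _ => Finset.card_image_of_injective B zeroMid_injective

end composedFamily

lemma ite_prod_eq_zero_eq_add {X Y : Type*} [Zero X] [DecidableEq X] [Zero Y] [DecidableEq Y]
    (w : X × Y) :
    (if w = 0 then 0 else 1 : ℕ) =
      (if w.1 = 0 then 0 else 1) + if w.1 = 0 then (if w.2 = 0 then 0 else 1) else 0 := by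
  obtain ⟨x, y⟩ := w
  by_cases hx : x = 0 <;> by_cases hy : y = 0 <;> simp [hx, hy]

theorem composition_with_difference_matrix_general {G X Y : Type*}
    [AddGroup G] [DecidableEq G]
    [AddGroup X] [DecidableEq X]
    [AddGroup Y] [Fintype Y] [DecidableEq Y]
    (FX : Multiset (List (G × X))) (hFXnodup : ∀ B ∈ FX, B.Nodup)
    (hFXdf : ∀ p : G × X,
      ((FX.bind fun B => mDiffs (B : Multiset (G × X))).count p) =
        if p.2 = 0 then 0 else 1)
    (hFXres : ∀ x : X,
      Multiset.card ((FX.bind fun B => (B : Multiset (G × X))).filter fun p => p.2 = x) =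
        if x = 0 then 0 else 1)
    (FY : Multiset (Finset (G × Y)))
    (hFYdf : ∀ p : G × Y,
      ((FY.bind fun B => mDiffs B.val).count p) = if p.2 = 0 then 0 else 1)
    (hFYres : ∀ y : Y,
      Multiset.card ((FY.bind Finset.val).filter fun p => p.2 = y) =
        if y = 0 then 0 else 1)
    (kmax : ℕ) (hkmax : ∀ B ∈ FX, B.length ≤ kmax)
    (M : ℕ → Fin (Fintype.card Y) → Y)
    (hMhom : ∀ r < kmax, Function.Bijective (M r))
    (hMdm : ∀ r, r < kmax → ∀ r', r' < kmax → r ≠ r' →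
      Function.Bijective fun c => M r c - M r' c) :
    (∀ p : G × X × Y,
      ((((FX.bind fun B => (Finset.univ : Finset (Fin (Fintype.card Y))).val.map fun c =>
          (B.zipIdx.map fun q => (q.1.1, q.1.2, M q.2 c)).toFinset) +
        FY.map fun B => B.image fun p => (p.1, (0 : X), p.2)).bind fun C =>
          mDiffs C.val).count p) = if p.2 = 0 then 0 else 1) ∧
    (∀ z : X × Y,
      Multiset.card
        ((((FX.bind fun B => (Finset.univ : Finset (Fin (Fintype.card Y))).val.map fun c =>
            (B.zipIdx.map fun q => (q.1.1, q.1.2, M q.2 c)).toFinset) +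
          FY.map fun B => B.image fun p => (p.1, (0 : X), p.2)).bind Finset.val).filter
            fun p => p.2 = z) = if z = 0 then 0 else 1) ∧
    (((FX.bind fun B => (Finset.univ : Finset (Fin (Fintype.card Y))).val.map fun c =>
          (B.zipIdx.map fun q => (q.1.1, q.1.2, M q.2 c)).toFinset) +
        FY.map fun B => B.image fun p => (p.1, (0 : X), p.2)).map Finset.card) =
      (FX.bind fun B => Multiset.replicate (Fintype.card Y) B.length) +
        FY.map Finset.card := by
  have hrows : ∀ B ∈ FX, ∀ r < B.length, Bijective (M r) :=
    fun B hB r hr => hMhom r (hr.trans_le (hkmax B hB))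
  have hrowPairs : ∀ B ∈ FX, ∀ r < B.length, ∀ r' < B.length, r ≠ r' →
      Bijective fun c => M r c - M r' c := fun B hB r hr r' hr' =>
    hMdm r (hr.trans_le (hkmax B hB)) r' (hr'.trans_le (hkmax B hB))
  refine ⟨fun p => ?_, fun z => ?_, map_card_composedFamily FX FY M hFXnodup⟩
  · rw [ite_prod_eq_zero_eq_add p.2, ← hFXdf (p.1, p.2.1), ← hFYdf (p.1, p.2.2)]
    exact count_mDiffs_composedFamily FX FY M hFXnodup hrowPairs p
  · rw [ite_prod_eq_zero_eq_add z, ← hFXres z.1, ← hFYres z.2]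
    exact card_filter_composedFamily FX FY M hFXnodup hrows z

/-- Composition via difference matrices: from a resolvable `(G × X, G × {0}, K₁, 1)`-DF
`F_X` (blocks given as duplicate-free lists so that rows of the difference matrix can
be assigned to entries), a resolvable `(G × Y, G × {0}, K₂, 1)`-DF `F_Y`, and a
homogeneous `(Y, max K₁, 1)` difference matrix `M` (with `|Y|` columns), the family of
all blocks `B ∘ M^c = {(g_i, x_i, M i c)}` together with all blocks `{(g_i, 0, y_i)}`
is a resolvable `(G × X × Y, G × {0}, |Y|·K₁ ∪ K₂, 1)`-DF. -/
theorem composition_with_difference_matrix {G X Y : Type*}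
    [AddGroup G] [Fintype G] [DecidableEq G]
    [AddGroup X] [Fintype X] [DecidableEq X]
    [AddGroup Y] [Fintype Y] [DecidableEq Y]
    (FX : Multiset (List (G × X))) (hFXnodup : ∀ B ∈ FX, B.Nodup)
    (hFXdf : ∀ p : G × X,
      ((FX.bind fun B => mDiffs (B : Multiset (G × X))).count p) =
        if p.2 = 0 then 0 else 1)
    (hFXres : ∀ x : X,
      Multiset.card ((FX.bind fun B => (B : Multiset (G × X))).filter fun p => p.2 = x) =
        if x = 0 then 0 else 1)
    (FY : Multiset (Finset (G × Y)))
    (hFYdf : ∀ p : G × Y,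
      ((FY.bind fun B => mDiffs B.val).count p) = if p.2 = 0 then 0 else 1)
    (hFYres : ∀ y : Y,
      Multiset.card ((FY.bind Finset.val).filter fun p => p.2 = y) =
        if y = 0 then 0 else 1)
    (kmax : ℕ) (hkmax : ∀ B ∈ FX, B.length ≤ kmax)
    (M : ℕ → Fin (Fintype.card Y) → Y)
    (hMhom : ∀ r < kmax, Function.Bijective (M r))
    (hMdm : ∀ r, r < kmax → ∀ r', r' < kmax → r ≠ r' →
      Function.Bijective fun c => M r c - M r' c) :
    (∀ p : G × X × Y,
      ((((FX.bind fun B => (Finset.univ : Finset (Fin (Fintype.card Y))).val.map fun c =>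
          (B.zipIdx.map fun q => (q.1.1, q.1.2, M q.2 c)).toFinset) +
        FY.map fun B => B.image fun p => (p.1, (0 : X), p.2)).bind fun C =>
          mDiffs C.val).count p) = if p.2 = 0 then 0 else 1) ∧
    (∀ z : X × Y,
      Multiset.card
        ((((FX.bind fun B => (Finset.univ : Finset (Fin (Fintype.card Y))).val.map fun c =>
            (B.zipIdx.map fun q => (q.1.1, q.1.2, M q.2 c)).toFinset) +
          FY.map fun B => B.image fun p => (p.1, (0 : X), p.2)).bind Finset.val).filter
            fun p => p.2 = z) = if z = 0 then 0 else 1) ∧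
    (((FX.bind fun B => (Finset.univ : Finset (Fin (Fintype.card Y))).val.map fun c =>
          (B.zipIdx.map fun q => (q.1.1, q.1.2, M q.2 c)).toFinset) +
        FY.map fun B => B.image fun p => (p.1, (0 : X), p.2)).map Finset.card) =
      (FX.bind fun B => Multiset.replicate (Fintype.card Y) B.length) +
        FY.map Finset.card :=
  composition_with_difference_matrix_general FX hFXnodup hFXdf hFXres FY hFYdf hFYres kmax hkmax M
    hMhom hMdm
end

section
/- For fixed e ≥ 2, the function n ↦ Q(e, n) := (1/4)·(U + √(U² + 4n e^{n-1}))², where U = Σ_{h=1}^{n} C(n,h)(e-1)^h (h-1), is strictly increasing in n for n ≥ 1. -/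
/-- `U(e, n) = Σ_{h=1}^{n} C(n,h) (e-1)^h (h-1)`. -/
noncomputable def Ufun (e n : ℕ) : ℝ :=
  ∑ h ∈ Finset.Icc 1 n, (n.choose h : ℝ) * ((e : ℝ) - 1) ^ h * ((h : ℝ) - 1)

/-- `Q(e, n) = (1/4) (U + √(U² + 4 n e^{n-1}))²`. -/
noncomputable def Qfun (e n : ℕ) : ℝ :=
  (1 / 4) * (Ufun e n + Real.sqrt ((Ufun e n) ^ 2 + 4 * (n : ℝ) * (e : ℝ) ^ (n - 1))) ^ 2

/-!
`Q(e, n)` is the square of the positive root `(U + √(U² + 4c)) / 2` of `x² - U x - c`, with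
`c = n e^{n-1}`. For `e ≥ 1` every summand of `U` is nonnegative and grows with `n` (through
`C(n, h)` and through the range of summation), `c` is strictly increasing in `n`, and the positive
root is increasing in `U ≥ 0` and strictly increasing in `c`.
-/

lemma sq_add_sqrt_sq_add_lt {u u' c c' : ℝ} (hu : 0 ≤ u) (huu' : u ≤ u') (hc : 0 ≤ c)
    (hcc' : c < c') : (u + √(u ^ 2 + c)) ^ 2 < (u' + √(u' ^ 2 + c')) ^ 2 := by
  have hsq : u ^ 2 ≤ u' ^ 2 := pow_le_pow_left₀ hu huu' 2
  have hsqrt : √(u ^ 2 + c) < √(u' ^ 2 + c') := Real.sqrt_lt_sqrt (by positivity) (by linarith)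
  exact pow_lt_pow_left₀ (by linarith) (by positivity) two_ne_zero

lemma strictMono_natCast_mul_pow_pred {x : ℝ} (hx : 1 ≤ x) :
    StrictMono fun n : ℕ => (n : ℝ) * x ^ (n - 1) := by
  intro m n hmn
  exact mul_lt_mul_of_lt_of_le_of_nonneg_of_pos (by exact_mod_cast hmn)
    (pow_le_pow_right₀ hx (by omega)) m.cast_nonneg (by positivity)

lemma Ufun_summand_nonneg {e : ℕ} (he : 1 ≤ e) (n : ℕ) {h : ℕ} (hh : 1 ≤ h) :
    0 ≤ (n.choose h : ℝ) * ((e : ℝ) - 1) ^ h * ((h : ℝ) - 1) := by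
  have he' : (1 : ℝ) ≤ e := by exact_mod_cast he
  have hh' : (1 : ℝ) ≤ h := by exact_mod_cast hh
  exact mul_nonneg (mul_nonneg (Nat.cast_nonneg _) (pow_nonneg (by linarith) h))
    (by linarith)

lemma Ufun_nonneg {e : ℕ} (he : 1 ≤ e) (n : ℕ) : 0 ≤ Ufun e n :=
  Finset.sum_nonneg fun _ hh => Ufun_summand_nonneg he n (Finset.mem_Icc.mp hh).1

lemma Ufun_mono {e : ℕ} (he : 1 ≤ e) : Monotone (Ufun e) := by
  intro m n hmn
  calc Ufun e m
      ≤ ∑ h ∈ Finset.Icc 1 m, (n.choose h : ℝ) * ((e : ℝ) - 1) ^ h * ((h : ℝ) - 1) := by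
        refine Finset.sum_le_sum fun h hh => ?_
        have he' : (1 : ℝ) ≤ e := by exact_mod_cast he
        have hh' : (1 : ℝ) ≤ h := by exact_mod_cast (Finset.mem_Icc.mp hh).1
        have hchoose : (m.choose h : ℝ) ≤ n.choose h := by
          exact_mod_cast Nat.choose_le_choose h hmn
        gcongr
    _ ≤ Ufun e n :=
        Finset.sum_le_sum_of_subset_of_nonneg (Finset.Icc_subset_Icc_right hmn)
          fun _ hh _ => Ufun_summand_nonneg he n (Finset.mem_Icc.mp hh).1

lemma Qfun_strictMono {e : ℕ} (he : 1 ≤ e) : StrictMono (Qfun e) := by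
  intro m n hmn
  have he' : (1 : ℝ) ≤ e := by exact_mod_cast he
  have hc : 4 * (m : ℝ) * (e : ℝ) ^ (m - 1) < 4 * (n : ℝ) * (e : ℝ) ^ (n - 1) := by
    simpa only [mul_assoc] using
      mul_lt_mul_of_pos_left (strictMono_natCast_mul_pow_pred he' hmn) four_pos
  unfold Qfun
  refine mul_lt_mul_of_pos_left ?_ (by norm_num)
  exact sq_add_sqrt_sq_add_lt (Ufun_nonneg he m) (Ufun_mono he hmn.le) (by positivity) hc

/-- For fixed `e ≥ 2`, the function `n ↦ Q(e, n)` is strictly increasing for `n ≥ 1`. -/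
theorem Qfun_strictMonoOn (e : ℕ) (he : 2 ≤ e) :
    StrictMonoOn (fun n => Qfun e n) {n : ℕ | 1 ≤ n} :=
  (Qfun_strictMono (by omega : 1 ≤ e)).strictMonoOn _
end
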